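/- arXiv:1510.07552 — 2 statements merged into one kernel-verified Lean document; each statement's English description precedes it below -/
import Mathlib

section
/- For a nilpotent matrix e in gl_n(C) with Jordan type given by a partition d = [d_1,...,d_N] of n, the dimension (over C) of the centralizer of e in gl_n(C) equals the sum over i,j of min(d_i, d_j). -/
/-!
Write `J_m` for the nilpotent Jordan block of size `m`. As `jordanMatrix d` is block diagonal with
blocks `J_{d_i}`, a matrix commutes with it exactly when each of its blocks `Y_{ij}` satisfies
`J_{d_i} Y = Y J_{d_j}`. For such a `Y` of size `m × k`, column `b` is `J_m ^ (k - 1 - b)` applied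
to the last column `v`, and `J_m ^ k v = Y J_k ^ k e_last = 0`; so `Y` is determined by the first
`min m k` entries of `v`, and these can be chosen freely. Hence the block contributes `min m k`.
-/

open scoped Matrix

/-- The nilpotent matrix in Jordan normal form with Jordan blocks of sizes
`d 0, …, d (N-1)`, realized on the index type `Σ i, Fin (d i)`.  The entry in
row `⟨i, a⟩` and column `⟨j, b⟩` is `1` exactly when the two indices lie in the
same block (`i = j`) and `b = a + 1`. -/
noncomputable def jordanMatrix {N : ℕ} (d : Fin N → ℕ) :
    Matrix (Σ i : Fin N, Fin (d i)) (Σ i : Fin N, Fin (d i)) ℂ :=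
  fun p q =>
    if _h : p.1 = q.1 then (if (q.2 : ℕ) = (p.2 : ℕ) + 1 then 1 else 0) else 0

theorem Fin.sum_univ_ite_val_eq {R : Type*} [AddCommMonoid R] {m : ℕ} (t : ℕ) (f : Fin m → R) :
    ∑ c : Fin m, (if (c : ℕ) = t then f c else 0) = if h : t < m then f ⟨t, h⟩ else 0 := by
  split_ifs with h
  · rw [Finset.sum_eq_single ⟨t, h⟩ (fun c _ hc => if_neg (fun hct => hc (Fin.ext hct))) (by simp)]
    simp
  · exact Finset.sum_eq_zero fun c _ => if_neg (by omega)

namespace Matrix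

variable {R : Type*}

section Intertwiners

variable [CommSemiring R] {m n : Type*} [Fintype m] [Fintype n]

def intertwiners (A : Matrix m m R) (B : Matrix n n R) : Submodule R (Matrix m n R) :=
  LinearMap.eqLocus (mulLeftLinearMap n R A) (mulRightLinearMap m R B)

theorem mem_intertwiners {A : Matrix m m R} {B : Matrix n n R} {Y : Matrix m n R} :
    Y ∈ intertwiners A B ↔ A * Y = Y * B :=
  Iff.rfl

theorem intertwiners_le_pow [DecidableEq m] [DecidableEq n] (A : Matrix m m R)
    (B : Matrix n n R) (r : ℕ) : intertwiners A B ≤ intertwiners (A ^ r) (B ^ r) := by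
  intro Y hY
  rw [mem_intertwiners] at hY ⊢
  induction r with
  | zero => rw [pow_zero, pow_zero, Matrix.one_mul, Matrix.mul_one]
  | succ r ih =>
    rw [pow_succ, pow_succ, Matrix.mul_assoc, hY, ← Matrix.mul_assoc, ih, Matrix.mul_assoc]

end Intertwiners

section SigmaBlocks

variable {ι κ : Type*} {m : ι → Type*} {n : κ → Type*}

def sigmaBlock (X : Matrix (Σ i, m i) (Σ j, n j) R) (i : ι) (j : κ) : Matrix (m i) (n j) R :=
  of fun a b => X ⟨i, a⟩ ⟨j, b⟩

theorem ext_iff_sigmaBlock {X Y : Matrix (Σ i, m i) (Σ j, n j) R} :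
    X = Y ↔ ∀ i j, sigmaBlock X i j = sigmaBlock Y i j := by
  refine ⟨fun h _ _ => h ▸ rfl, fun h => ?_⟩
  ext ⟨i, a⟩ ⟨j, b⟩
  exact congr_fun₂ (h i j) a b

theorem sigmaBlock_blockDiagonal'_mul [NonUnitalNonAssocSemiring R] [Fintype ι] [DecidableEq ι]
    [∀ i, Fintype (m i)]
    (A : ∀ i, Matrix (m i) (m i) R) (X : Matrix (Σ i, m i) (Σ j, n j) R) (i : ι) (j : κ) :
    sigmaBlock (blockDiagonal' A * X) i j = A i * sigmaBlock X i j := by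
  ext a b
  simp [sigmaBlock, mul_apply, Fintype.sum_sigma, blockDiagonal'_apply]

theorem sigmaBlock_mul_blockDiagonal' [NonUnitalNonAssocSemiring R] [Fintype κ] [DecidableEq κ]
    [∀ j, Fintype (n j)]
    (B : ∀ j, Matrix (n j) (n j) R) (X : Matrix (Σ i, m i) (Σ j, n j) R) (i : ι) (j : κ) :
    sigmaBlock (X * blockDiagonal' B) i j = sigmaBlock X i j * B j := by
  ext a b
  simp [sigmaBlock, mul_apply, Fintype.sum_sigma, blockDiagonal'_apply]

variable [Fintype ι] [DecidableEq ι] [∀ i, Fintype (m i)]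
  [Fintype κ] [DecidableEq κ] [∀ j, Fintype (n j)]
  [CommSemiring R] (A : ∀ i, Matrix (m i) (m i) R) (B : ∀ j, Matrix (n j) (n j) R)

theorem mem_intertwiners_blockDiagonal'_iff {X : Matrix (Σ i, m i) (Σ j, n j) R} :
    X ∈ intertwiners (blockDiagonal' A) (blockDiagonal' B) ↔
      ∀ i j, sigmaBlock X i j ∈ intertwiners (A i) (B j) := by
  simp only [mem_intertwiners, ext_iff_sigmaBlock, sigmaBlock_blockDiagonal'_mul,
    sigmaBlock_mul_blockDiagonal']

def intertwinersBlockDiagonal'Equiv :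
    intertwiners (blockDiagonal' A) (blockDiagonal' B) ≃ₗ[R]
      ∀ i j, intertwiners (A i) (B j) where
  toFun X i j := ⟨sigmaBlock X i j, (mem_intertwiners_blockDiagonal'_iff A B).1 X.2 i j⟩
  map_add' _ _ := rfl
  map_smul' _ _ := rfl
  invFun Y := ⟨of fun p q => (Y p.1 q.1 : Matrix (m p.1) (n q.1) R) p.2 q.2,
    (mem_intertwiners_blockDiagonal'_iff A B).2 fun i j => (Y i j).2⟩
  left_inv _ := rfl
  right_inv _ := rfl

end SigmaBlocks

section Shift

variable (R) [Semiring R]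

def shiftMatrix (m : ℕ) : Matrix (Fin m) (Fin m) R :=
  of fun a b => if (b : ℕ) = a + 1 then 1 else 0

variable {R}

theorem shiftMatrix_apply {m : ℕ} (a b : Fin m) :
    shiftMatrix R m a b = if (b : ℕ) = a + 1 then 1 else 0 :=
  rfl

theorem shiftMatrix_pow_apply {m : ℕ} (r : ℕ) (a b : Fin m) :
    (shiftMatrix R m ^ r) a b = if (b : ℕ) = a + r then 1 else 0 := by
  induction r generalizing b with
  | zero => simp [one_apply, Fin.ext_iff, eq_comm]
  | succ r ih =>
    simp only [pow_succ, mul_apply, ih, shiftMatrix_apply, ite_mul, one_mul, zero_mul]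
    rw [Fin.sum_univ_ite_val_eq]
    dsimp only
    split_ifs <;> first | rfl | omega

theorem shiftMatrix_pow_self (m : ℕ) : shiftMatrix R m ^ m = 0 := by
  ext a b
  rw [shiftMatrix_pow_apply, if_neg (by omega), zero_apply]

theorem shiftMatrix_pow_mul_apply {m : ℕ} {n : Type*} (r : ℕ) (Y : Matrix (Fin m) n R)
    (a : Fin m) (b : n) :
    (shiftMatrix R m ^ r * Y) a b = if h : (a : ℕ) + r < m then Y ⟨a + r, h⟩ b else 0 := by
  simp only [mul_apply, shiftMatrix_pow_apply, ite_mul, one_mul, zero_mul]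
  exact Fin.sum_univ_ite_val_eq _ _

theorem mul_shiftMatrix_pow_apply {k : ℕ} {l : Type*} (r : ℕ) (Y : Matrix l (Fin k) R)
    (a : l) (b : Fin k) :
    (Y * shiftMatrix R k ^ r) a b = if h : r ≤ b then Y a ⟨b - r, by omega⟩ else 0 := by
  simp only [mul_apply, shiftMatrix_pow_apply, mul_ite, mul_one, mul_zero]
  split_ifs with h
  · simp_rw [show ∀ c : Fin k, ((b : ℕ) = c + r ↔ (c : ℕ) = b - r) from fun c => by omega]
    rw [Fin.sum_univ_ite_val_eq, dif_pos (by omega)]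
  · exact Finset.sum_eq_zero fun c _ => if_neg (by omega)

end Shift

section ShiftIntertwiners

variable [CommSemiring R] {m k : ℕ}

theorem apply_eq_of_mem_intertwiners_shiftMatrix {Y : Matrix (Fin m) (Fin k) R}
    (hY : Y ∈ intertwiners (shiftMatrix R m) (shiftMatrix R k)) (a : Fin m) (b : Fin k) :
    Y a b = if h : (a : ℕ) + b.rev < min m k then
      Y ⟨a + b.rev, h.trans_le (min_le_left m k)⟩ ⟨k - 1, Nat.sub_one_lt_of_lt b.2⟩ else 0 := by
  have hk : k - 1 < k := Nat.sub_one_lt_of_lt b.2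
  have hpow r := mem_intertwiners.1 (intertwiners_le_pow _ _ r hY)
  have hcol : Y a b = (shiftMatrix R m ^ (b.rev : ℕ) * Y) a ⟨k - 1, hk⟩ := by
    rw [hpow, mul_shiftMatrix_pow_apply, dif_pos (by simp only [Fin.val_rev]; omega)]
    congr
    ext
    simp only [Fin.val_rev]
    omega
  have hvanish (c : Fin m) (hc : k ≤ c) : Y c ⟨k - 1, hk⟩ = 0 := by
    have hzero := congr_fun₂ (hpow k) ⟨c - k, by omega⟩ ⟨k - 1, hk⟩
    rw [shiftMatrix_pow_self, Matrix.mul_zero, zero_apply, shiftMatrix_pow_mul_apply,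
      dif_pos (by dsimp only; omega)] at hzero
    rw [← hzero]
    congr
    ext
    dsimp only
    omega
  rw [hcol, shiftMatrix_pow_mul_apply]
  by_cases hmin : (a : ℕ) + b.rev < min m k
  · rw [dif_pos hmin, dif_pos (hmin.trans_le (min_le_left m k))]
  · rw [dif_neg hmin]
    split_ifs with hm
    · exact hvanish _ (by dsimp only; omega)
    · rfl

-- Constant along diagonals, and zero off the `min m k` diagonals nearest the top right corner.
def shiftIntertwiner (c : Fin (min m k) → R) : Matrix (Fin m) (Fin k) R :=
  of fun a b => if h : (a : ℕ) + b.rev < min m k then c ⟨a + b.rev, h⟩ else 0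

theorem shiftIntertwiner_mem_intertwiners (c : Fin (min m k) → R) :
    shiftIntertwiner c ∈ intertwiners (shiftMatrix R m) (shiftMatrix R k) := by
  rw [mem_intertwiners, ← pow_one (shiftMatrix R m), ← pow_one (shiftMatrix R k)]
  ext a b
  rw [shiftMatrix_pow_mul_apply, mul_shiftMatrix_pow_apply]
  simp only [shiftIntertwiner, of_apply, Fin.val_rev]
  split_ifs <;> first | rfl | omega | (congr 1; ext; dsimp only; omega)

def shiftIntertwinersEquiv :
    intertwiners (shiftMatrix R m) (shiftMatrix R k) ≃ₗ[R] (Fin (min m k) → R) where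
  toFun Y s := (Y : Matrix (Fin m) (Fin k) R) ⟨s, s.2.trans_le (min_le_left m k)⟩
    ⟨k - 1, Nat.sub_one_lt_of_lt (s.2.trans_le (min_le_right m k))⟩
  map_add' _ _ := rfl
  map_smul' _ _ := rfl
  invFun c := ⟨shiftIntertwiner c, shiftIntertwiner_mem_intertwiners c⟩
  left_inv Y := by
    ext a b
    rw [apply_eq_of_mem_intertwiners_shiftMatrix Y.2 a b]
    rfl
  right_inv c := by
    ext s
    have hs := s.2
    simp only [shiftIntertwiner, of_apply, Fin.val_rev]
    rw [dif_pos (by omega)]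
    congr
    omega

theorem finrank_intertwiners_shiftMatrix {K : Type*} [Field K] (m k : ℕ) :
    Module.finrank K (intertwiners (shiftMatrix K m) (shiftMatrix K k)) = min m k := by
  rw [shiftIntertwinersEquiv.finrank_eq, Module.finrank_fin_fun]

end ShiftIntertwiners

end Matrix

open Matrix

theorem jordanMatrix_eq_blockDiagonal' {N : ℕ} (d : Fin N → ℕ) :
    jordanMatrix d = blockDiagonal' fun i => shiftMatrix ℂ (d i) := by
  ext ⟨i, a⟩ ⟨j, b⟩
  by_cases h : i = j
  · subst h
    simp [jordanMatrix, shiftMatrix_apply]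
  · simp [jordanMatrix, blockDiagonal'_apply_ne _ _ _ h, h]

theorem centralizer_finrank_of_jordan_type_general
    {N : ℕ} (d : Fin N → ℕ)
    (e : Matrix (Σ i : Fin N, Fin (d i)) (Σ i : Fin N, Fin (d i)) ℂ)
    (he : e = jordanMatrix d) :
    Module.finrank ℂ
      (LinearMap.ker (LinearMap.mulLeft ℂ e - LinearMap.mulRight ℂ e)) =
      ∑ i, ∑ j, min (d i) (d j) := by
  have hker : LinearMap.ker (LinearMap.mulLeft ℂ e - LinearMap.mulRight ℂ e) =
      intertwiners (blockDiagonal' fun i => shiftMatrix ℂ (d i))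
        (blockDiagonal' fun i => shiftMatrix ℂ (d i)) := by
    rw [← LinearMap.eqLocus_eq_ker_sub, he, jordanMatrix_eq_blockDiagonal']
    rfl
  rw [hker, (intertwinersBlockDiagonal'Equiv _ _).finrank_eq]
  simp only [Module.finrank_pi_fintype, finrank_intertwiners_shiftMatrix]

/-- For a nilpotent matrix `e ∈ gl_n(ℂ)` with Jordan type given by
a partition `d = [d_1, …, d_N]` of `n` (so `d` is weakly decreasing and sums to
`n`), the dimension over `ℂ` of the centralizer `{x : x·e = e·x}` of `e` in
`gl_n(ℂ)` equals `∑_{i,j} min (d i) (d j)`. -/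
theorem centralizer_finrank_of_jordan_type
    {N : ℕ} (d : Fin N → ℕ)
    (n : ℕ) (hsum : ∑ i, d i = n)
    (hsorted : ∀ i j : Fin N, i ≤ j → d j ≤ d i)
    (e : Matrix (Σ i : Fin N, Fin (d i)) (Σ i : Fin N, Fin (d i)) ℂ)
    (he : e = jordanMatrix d) :
    Module.finrank ℂ
      (LinearMap.ker (LinearMap.mulLeft ℂ e - LinearMap.mulRight ℂ e)) =
      ∑ i, ∑ j, min (d i) (d j) :=
  centralizer_finrank_of_jordan_type_general d e he
end

section
/- The dimension of the conjugation orbit (adjoint orbit) of a nilpotent matrix e in gl_n(C) with Jordan partition [d_1,...,d_N] equals n² − Σ_{i,j} min(d_i, d_j); in particular this number is even. -/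
/-!
A matrix `X` commutes with the nilpotent Jordan matrix `J` iff `(J X)(p, q) = (X J)(p, q)`, i.e.
`X (i, p + 1) (j, q) = X (i, p) (j, q - 1)`, where entries outside a block read as `0`. So each
block `X_{ij}` is constant along its diagonals and vanishes on all but the `min (d i) (d j)`
diagonals ending in its top-right corner: it is an upper triangular Toeplitz matrix padded with
zeros, and the centralizer has dimension `∑ i, ∑ j, min (d i) (d j)`. Modulo `2` the off-diagonal
terms of this double sum cancel in pairs, leaving `∑ i, d i = n ≡ n ^ 2`.
-/

open scoped Matrix

theorem LinearMap.mem_ker_mulLeft_sub_mulRight {R A : Type*} [CommSemiring R] [Ring A]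
    [Algebra R A] {a x : A} :
    x ∈ LinearMap.ker (LinearMap.mulLeft R a - LinearMap.mulRight R a) ↔ Commute a x := by
  rw [LinearMap.mem_ker, LinearMap.sub_apply, LinearMap.mulLeft_apply, LinearMap.mulRight_apply,
    sub_eq_zero]
  rfl

theorem Finset.sum_sum_eq_sum_diag_of_charTwo {ι R : Type*} [CommRing R] [CharP R 2]
    (s : Finset ι) (f : ι → ι → R) (hf : ∀ i j, f i j = f j i) :
    ∑ i ∈ s, ∑ j ∈ s, f i j = ∑ i ∈ s, f i i := by
  classical
  have hoff : ∑ x ∈ s.offDiag, f x.1 x.2 = 0 :=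
    Finset.sum_involution (fun x _ => x.swap)
      (fun x _ => by rw [Prod.fst_swap, Prod.snd_swap, hf, CharTwo.add_self_eq_zero])
      (fun x hx _ h => (Finset.mem_offDiag.mp hx).2.2 (congrArg Prod.snd h))
      (fun x hx => by
        obtain ⟨h₁, h₂, hne⟩ := Finset.mem_offDiag.mp hx
        exact Finset.mem_offDiag.mpr ⟨h₂, h₁, hne.symm⟩)
      (fun x _ => x.swap_swap)
  rw [Finset.sum_product' s s f |>.symm, ← Finset.diag_union_offDiag,
    Finset.sum_union (Finset.disjoint_diag_offDiag _), Finset.sum_diag, hoff, add_zero]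

theorem even_sq_sub_sum_sum_min {ι : Type*} (s : Finset ι) (d : ι → ℕ) :
    Even ((∑ i ∈ s, d i) ^ 2 - ∑ i ∈ s, ∑ j ∈ s, min (d i) (d j)) := by
  have hcast : ((∑ i ∈ s, ∑ j ∈ s, min (d i) (d j) : ℕ) : ZMod 2) = ((∑ i ∈ s, d i) ^ 2 : ℕ) := by
    push_cast
    rw [ZMod.pow_card, Finset.sum_sum_eq_sum_diag_of_charTwo s _ fun i j => by rw [min_comm]]
    simp only [min_self]
  rcases le_total (∑ i ∈ s, ∑ j ∈ s, min (d i) (d j)) ((∑ i ∈ s, d i) ^ 2) with h | h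
  · rw [Nat.even_sub h, Nat.even_iff, Nat.even_iff,
      (ZMod.natCast_eq_natCast_iff' _ _ 2).mp hcast]
  · rw [Nat.sub_eq_zero_of_le h]
    exact Even.zero

section JordanCentralizer

variable {N : ℕ} {d : Fin N → ℕ} {X : Matrix (Σ i, Fin (d i)) (Σ i, Fin (d i)) ℂ}

theorem jordanMatrix_mul_apply (i : Fin N) (p : Fin (d i)) (j : Fin N) (q : Fin (d j)) :
    (jordanMatrix d * X) ⟨i, p⟩ ⟨j, q⟩ =
      if h : (p : ℕ) + 1 < d i then X ⟨i, ⟨p + 1, h⟩⟩ ⟨j, q⟩ else 0 := by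
  simp only [Matrix.mul_apply, jordanMatrix, dite_eq_ite, ite_mul, one_mul, zero_mul,
    Fintype.sum_sigma, Finset.sum_ite_irrel, Finset.sum_const_zero, Finset.sum_ite_eq,
    Finset.mem_univ, ↓reduceIte]
  split_ifs with h
  · exact (Fintype.sum_eq_single (⟨p + 1, h⟩ : Fin (d i))
      fun r hr => if_neg fun e => hr (Fin.ext e)).trans (if_pos rfl)
  · exact Finset.sum_eq_zero fun r _ => if_neg (by have := r.isLt; omega)

theorem mul_jordanMatrix_apply (i : Fin N) (p : Fin (d i)) (j : Fin N) (q : Fin (d j)) :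
    (X * jordanMatrix d) ⟨i, p⟩ ⟨j, q⟩ =
      if h : 0 < (q : ℕ) then X ⟨i, p⟩ ⟨j, ⟨q - 1, by omega⟩⟩ else 0 := by
  simp only [Matrix.mul_apply, jordanMatrix, dite_eq_ite, mul_ite, mul_one, mul_zero,
    Fintype.sum_sigma, Finset.sum_ite_irrel, Finset.sum_const_zero, Finset.sum_ite_eq',
    Finset.mem_univ, ↓reduceIte]
  split_ifs with h
  · exact (Fintype.sum_eq_single (⟨q - 1, by omega⟩ : Fin (d j))
      fun r hr => if_neg fun e => hr (Fin.ext (by simp; omega))).trans (if_pos (by simp; omega))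
  · exact Finset.sum_eq_zero fun r _ => if_neg (by omega)

theorem commute_jordanMatrix_iff :
    Commute (jordanMatrix d) X ↔ ∀ (i : Fin N) (p : Fin (d i)) (j : Fin N) (q : Fin (d j)),
      (if h : (p : ℕ) + 1 < d i then X ⟨i, ⟨p + 1, h⟩⟩ ⟨j, q⟩ else 0) =
        if h : 0 < (q : ℕ) then X ⟨i, p⟩ ⟨j, ⟨q - 1, by omega⟩⟩ else 0 := by
  simp only [Commute, SemiconjBy, ← Matrix.ext_iff, Sigma.forall, jordanMatrix_mul_apply,
    mul_jordanMatrix_apply]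

section Commute

variable (hX : Commute (jordanMatrix d) X) {i j : Fin N}
include hX

theorem Commute.jordanMatrix_apply_eq_apply_succ_succ {p q : ℕ} (hp : p + 1 < d i)
    (hq : q + 1 < d j) :
    X ⟨i, ⟨p, by omega⟩⟩ ⟨j, ⟨q, by omega⟩⟩ = X ⟨i, ⟨p + 1, hp⟩⟩ ⟨j, ⟨q + 1, hq⟩⟩ := by
  simpa [hp] using (commute_jordanMatrix_iff.mp hX i ⟨p, by omega⟩ j ⟨q + 1, hq⟩).symm

theorem Commute.jordanMatrix_apply_eq_apply_add {p q : ℕ} (m : ℕ) (hp : p + m < d i)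
    (hq : q + m < d j) :
    X ⟨i, ⟨p, by omega⟩⟩ ⟨j, ⟨q, by omega⟩⟩ = X ⟨i, ⟨p + m, hp⟩⟩ ⟨j, ⟨q + m, hq⟩⟩ := by
  induction m generalizing p q with
  | zero => rfl
  | succ m ih =>
    rw [hX.jordanMatrix_apply_eq_apply_succ_succ (by omega) (by omega),
      ih (by omega) (by omega)]
    simp only [Nat.add_right_comm _ 1 m, Nat.add_assoc]

theorem Commute.jordanMatrix_apply_eq_apply_of_add_eq {p p' : Fin (d i)} {q q' : Fin (d j)}
    (h : (p : ℕ) + q' = p' + q) : X ⟨i, p⟩ ⟨j, q⟩ = X ⟨i, p'⟩ ⟨j, q'⟩ := by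
  wlog hle : (p : ℕ) ≤ p' generalizing p p' q q'
  · exact (this (by omega) (by omega)).symm
  obtain ⟨p', hp'⟩ := p'
  obtain ⟨q', hq'⟩ := q'
  obtain ⟨m, rfl⟩ := Nat.exists_eq_add_of_le hle
  obtain rfl : q' = q + m := by simp only at h; omega
  exact hX.jordanMatrix_apply_eq_apply_add m _ _

theorem Commute.jordanMatrix_apply_succ_zero {p : ℕ} (hp : p + 1 < d i) (hj : 0 < d j) :
    X ⟨i, ⟨p + 1, hp⟩⟩ ⟨j, ⟨0, hj⟩⟩ = 0 := by
  simpa [hp] using commute_jordanMatrix_iff.mp hX i ⟨p, by omega⟩ j ⟨0, hj⟩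

theorem Commute.jordanMatrix_apply_last {p q : ℕ} (hp : p + 1 = d i) (hq : q + 1 < d j) :
    X ⟨i, ⟨p, by omega⟩⟩ ⟨j, ⟨q, by omega⟩⟩ = 0 := by
  simpa [hp] using (commute_jordanMatrix_iff.mp hX i ⟨p, by omega⟩ j ⟨q + 1, hq⟩).symm

theorem Commute.jordanMatrix_apply_eq_zero_of_lt {p : Fin (d i)} {q : Fin (d j)} (h : (q : ℕ) < p) :
    X ⟨i, p⟩ ⟨j, q⟩ = 0 := by
  rw [hX.jordanMatrix_apply_eq_apply_of_add_eq (p' := ⟨p - q - 1 + 1, by omega⟩)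
    (q' := ⟨0, by omega⟩) (by simp; omega)]
  exact hX.jordanMatrix_apply_succ_zero _ _

theorem Commute.jordanMatrix_apply_eq_zero_of_add_lt {p : Fin (d i)} {q : Fin (d j)}
    (h : (q : ℕ) + d i < p + d j) : X ⟨i, p⟩ ⟨j, q⟩ = 0 := by
  rcases lt_or_ge (q : ℕ) p with hqp | hpq
  · exact hX.jordanMatrix_apply_eq_zero_of_lt hqp
  rw [hX.jordanMatrix_apply_eq_apply_of_add_eq (p' := ⟨d i - 1, by omega⟩)
    (q' := ⟨q + (d i - 1 - p), by omega⟩) (by simp; omega)]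
  exact hX.jordanMatrix_apply_last (by omega) (by omega)

end Commute

variable (d) in
/-- Block `(i, j)` of `blockToeplitz d c` carries `c i j k` on the `k`-th diagonal counted from its
top-right corner, i.e. at the entries `(p, q)` with `p + d j - 1 - q = k`. -/
noncomputable def blockToeplitz :
    (Π i j, Fin (min (d i) (d j)) → ℂ) →ₗ[ℂ] Matrix (Σ i, Fin (d i)) (Σ i, Fin (d i)) ℂ where
  toFun c := Matrix.of fun x y =>
    if h : (x.2 : ℕ) + d y.1 - y.2 - 1 < min (d x.1) (d y.1) then c x.1 y.1 ⟨_, h⟩ else 0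
  map_add' c c' := by
    ext x y
    simp only [Matrix.add_apply, Matrix.of_apply, Pi.add_apply]
    split_ifs <;> simp
  map_smul' a c := by
    ext x y
    simp only [Matrix.smul_apply, Matrix.of_apply, Pi.smul_apply, RingHom.id_apply]
    split_ifs <;> simp

theorem blockToeplitz_apply (c : Π i j, Fin (min (d i) (d j)) → ℂ) (i : Fin N) (p : Fin (d i))
    (j : Fin N) (q : Fin (d j)) :
    blockToeplitz d c ⟨i, p⟩ ⟨j, q⟩ =
      if h : (p : ℕ) + d j - q - 1 < min (d i) (d j) then c i j ⟨_, h⟩ else 0 :=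
  rfl

def toeplitzCoeffs (X : Matrix (Σ i, Fin (d i)) (Σ i, Fin (d i)) ℂ) :
    Π i j, Fin (min (d i) (d j)) → ℂ :=
  fun i j k => X ⟨i, ⟨0, by have := k.isLt; omega⟩⟩ ⟨j, ⟨d j - 1 - k, by have := k.isLt; omega⟩⟩

theorem toeplitzCoeffs_blockToeplitz (c : Π i j, Fin (min (d i) (d j)) → ℂ) :
    toeplitzCoeffs (blockToeplitz d c) = c := by
  funext i j k
  have := k.isLt
  rw [toeplitzCoeffs, blockToeplitz_apply, dif_pos (by simp only; omega)]
  congr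
  simp only
  omega

theorem commute_jordanMatrix_blockToeplitz (c : Π i j, Fin (min (d i) (d j)) → ℂ) :
    Commute (jordanMatrix d) (blockToeplitz d c) := by
  refine commute_jordanMatrix_iff.mpr fun i p j q => ?_
  simp only [blockToeplitz_apply]
  split_ifs <;> first | rfl | omega | (congr 1; ext; simp only; omega)

theorem Commute.blockToeplitz_toeplitzCoeffs (hX : Commute (jordanMatrix d) X) :
    blockToeplitz d (toeplitzCoeffs X) = X := by
  ext ⟨i, p⟩ ⟨j, q⟩
  rw [blockToeplitz_apply]
  split_ifs with h
  · exact hX.jordanMatrix_apply_eq_apply_of_add_eq (by simp only; omega)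
  · rcases Nat.lt_or_ge (q : ℕ) p with hqp | hpq
    · exact (hX.jordanMatrix_apply_eq_zero_of_lt hqp).symm
    · exact (hX.jordanMatrix_apply_eq_zero_of_add_lt (by omega)).symm

theorem range_blockToeplitz :
    LinearMap.range (blockToeplitz d) =
      LinearMap.ker (LinearMap.mulLeft ℂ (jordanMatrix d) - LinearMap.mulRight ℂ (jordanMatrix d)) := by
  ext X
  rw [LinearMap.mem_ker_mulLeft_sub_mulRight]
  constructor
  · rintro ⟨c, rfl⟩
    exact commute_jordanMatrix_blockToeplitz c
  · exact fun hX => ⟨_, hX.blockToeplitz_toeplitzCoeffs⟩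

theorem finrank_ker_mulLeft_sub_mulRight_jordanMatrix :
    Module.finrank ℂ
      (LinearMap.ker (LinearMap.mulLeft ℂ (jordanMatrix d) - LinearMap.mulRight ℂ (jordanMatrix d)))
      = ∑ i, ∑ j, min (d i) (d j) := by
  rw [← range_blockToeplitz, LinearMap.finrank_range_of_inj
    (Function.LeftInverse.injective toeplitzCoeffs_blockToeplitz)]
  simp [Module.finrank_pi_fintype]

end JordanCentralizer

theorem orbit_dim_of_jordan_type_general
    {N : ℕ} (d : Fin N → ℕ)
    (n : ℕ) (hsum : ∑ i, d i = n)
    (e : Matrix (Σ i : Fin N, Fin (d i)) (Σ i : Fin N, Fin (d i)) ℂ)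
    (he : e = jordanMatrix d)
    (orbitDim : ℕ)
    (horbit : orbitDim = n ^ 2 -
      Module.finrank ℂ
        (LinearMap.ker (LinearMap.mulLeft ℂ e - LinearMap.mulRight ℂ e))) :
    orbitDim = n ^ 2 - ∑ i, ∑ j, min (d i) (d j) ∧ Even orbitDim := by
  subst he hsum
  rw [finrank_ker_mulLeft_sub_mulRight_jordanMatrix] at horbit
  exact ⟨horbit, horbit ▸ even_sq_sub_sum_sum_min Finset.univ d⟩

/-- The dimension of the conjugation (adjoint) orbit of a nilpotent
matrix `e ∈ gl_n(ℂ)` with Jordan partition `d` equals `n² − ∑_{i,j} min (d i) (d j)`,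
and in particular this number is even.  Here, as the orbit is a smooth variety,
its dimension is `n²` minus the dimension of the stabilizer Lie algebra, i.e. of
the centralizer of `e` in `gl_n(ℂ)`. -/
theorem orbit_dim_of_jordan_type
    {N : ℕ} (d : Fin N → ℕ)
    (n : ℕ) (hsum : ∑ i, d i = n)
    (hsorted : ∀ i j : Fin N, i ≤ j → d j ≤ d i)
    (e : Matrix (Σ i : Fin N, Fin (d i)) (Σ i : Fin N, Fin (d i)) ℂ)
    (he : e = jordanMatrix d)
    (orbitDim : ℕ)
    (horbit : orbitDim = n ^ 2 -
      Module.finrank ℂ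
        (LinearMap.ker (LinearMap.mulLeft ℂ e - LinearMap.mulRight ℂ e))) :
    orbitDim = n ^ 2 - ∑ i, ∑ j, min (d i) (d j) ∧ Even orbitDim :=
  orbit_dim_of_jordan_type_general d n hsum e he orbitDim horbit
end
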